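/- The function h(ζ) = 2√(ζ(ζ−1)) − 2ζ + ln(4e·ζ·(−1 + 2ζ − 2√(ζ(ζ−1)))), analytic on ℂ \ [0,1], has the Laurent expansion at infinity h(ζ) = Σ_{j≥1} b_j/ζ^j with b_j = 2(2j−1)!/((j+1)(j!)² 4^j); in particular b_1 = 1/4, b_2 = 1/16, b_3 = 5/192. -/

import Mathlib

open Complex Filter Asymptotics
open scoped Nat

/-- The branch of `√(ζ(ζ - 1))` with cut `[0, 1]` that behaves like `ζ` as `ζ → +∞`. -/
noncomputable def sqrtBranch1 (ζ : ℂ) : ℂ :=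
  ζ * (1 - 1 / ζ) ^ ((1 : ℂ) / 2)

/-- The function `h(ζ) = 2√(ζ(ζ-1)) - 2ζ + ln(4e·ζ·(-1 + 2ζ - 2√(ζ(ζ-1))))`, analytic on
`ℂ \ [0,1]`. -/
noncomputable def hFun (ζ : ℂ) : ℂ :=
  2 * sqrtBranch1 ζ - 2 * ζ
    + Complex.log (4 * (Real.exp 1 : ℂ) * ζ * (-1 + 2 * ζ - 2 * sqrtBranch1 ζ))

/-- The Laurent coefficients `b_j = 2(2j-1)!/((j+1)(j!)² 4^j)`. -/
noncomputable def laurentCoeff (j : ℕ) : ℝ :=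
  2 * (2 * j - 1)! / ((j + 1) * (j !) ^ 2 * 4 ^ j)

/-!
Put `x = 1/ζ`, `u = √(1 - x)` and `v = 2/(1 + u) = 2ζ(1 - u)`. Then `h(ζ) = 1 - v + 2 log v`,
whose `x`-derivative is `v²/4`. On the other hand `v(x) = C(x/4)` for the Catalan generating
function `C(y) = ∑ cₙ yⁿ`: both solve `y C² = C - 1` and are close to `1`. As `C(y)² = ∑ cₙ₊₁ yⁿ`,
integrating termwise gives `h = ∑_{j ≥ 1} cⱼ xʲ / (j 4ʲ)`, and `cⱼ / (j 4ʲ)` is the stated `bⱼ`.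
Since `cⱼ ≤ 4ʲ`, all `|bⱼ| ≤ 1`, so for `|x| ≤ 1/2` the tail after `x^M` is at most `2 |x|^(M+1)`.
-/

lemma cpow_half_mul_self (z : ℂ) : z ^ (1 / 2 : ℂ) * z ^ (1 / 2 : ℂ) = z := by
  rw [← sq, one_div, cpow_ofNat_inv_pow]

lemma re_cpow_half_pos {z : ℂ} (hz : z ∈ slitPlane) : 0 < (z ^ (1 / 2 : ℂ)).re := by
  have hz0 : z ≠ 0 := slitPlane_ne_zero hz
  have harg : z.arg < Real.pi := (arg_le_pi z).lt_of_ne (slitPlane_arg_ne_pi hz)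
  have him : (log z * (1 / 2)).im = z.arg / 2 := by simp [log_im]; ring
  rw [cpow_def_of_ne_zero hz0, exp_re, him]
  exact mul_pos (Real.exp_pos _)
    (Real.cos_pos_of_mem_Ioo ⟨by linarith [neg_pi_lt_arg z], by linarith⟩)

lemma one_add_cpow_half_ne_zero {z : ℂ} (hz : z ∈ slitPlane) : 1 + z ^ (1 / 2 : ℂ) ≠ 0 := by
  intro h
  have := congrArg re h
  simp only [add_re, one_re, zero_re] at this
  linarith [re_cpow_half_pos hz]

lemma one_sub_mem_slitPlane {x : ℂ} (hx : ‖x‖ < 1) : 1 - x ∈ slitPlane :=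
  Or.inl (by simp only [sub_re, one_re]; linarith [re_le_norm x])

section BoundedCoeffs

variable {𝕜 : Type*} [RCLike 𝕜] {a : ℕ → 𝕜} {x : 𝕜}

lemma norm_mul_pow_le_of_norm_le_one (ha : ∀ n, ‖a n‖ ≤ 1) (n : ℕ) (x : 𝕜) :
    ‖a n * x ^ n‖ ≤ ‖x‖ ^ n := by
  rw [norm_mul, norm_pow]
  exact mul_le_of_le_one_left (by positivity) (ha n)

lemma summable_norm_mul_pow_of_norm_le_one (ha : ∀ n, ‖a n‖ ≤ 1) (hx : ‖x‖ < 1) :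
    Summable fun n => ‖a n * x ^ n‖ :=
  .of_nonneg_of_le (fun _ => norm_nonneg _) (norm_mul_pow_le_of_norm_le_one ha · x)
    (summable_geometric_of_lt_one (norm_nonneg x) hx)

lemma hasDerivAt_tsum_mul_pow_of_norm_le_one (ha : ∀ n, ‖a n‖ ≤ 1) (hx : ‖x‖ < 1) :
    HasDerivAt (fun z => ∑' n, a n * z ^ n) (∑' n, a n * (n * x ^ (n - 1))) x := by
  obtain ⟨r, hxr, hr1⟩ := exists_between hx
  have hr : 0 < r := (norm_nonneg x).trans_lt hxr
  refine hasDerivAt_tsum_of_isPreconnected (u := fun n : ℕ => r⁻¹ * (n * r ^ n))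
    (t := Metric.ball 0 r) (y₀ := 0) ?_ Metric.isOpen_ball (convex_ball 0 r).isPreconnected
    (fun (n : ℕ) y _ => (hasDerivAt_pow n y).const_mul (a n)) ?_ (Metric.mem_ball_self hr) ?_
    (mem_ball_zero_iff.2 hxr)
  · simpa using (summable_pow_mul_geometric_of_norm_lt_one 1
      (by rwa [Real.norm_of_nonneg hr.le])).mul_left r⁻¹
  · intro n y hy
    rw [mem_ball_zero_iff] at hy
    rcases n with _ | n
    · simp
    calc ‖a (n + 1) * ((n + 1 : ℕ) * y ^ (n + 1 - 1))‖ ≤ (n + 1 : ℕ) * ‖y‖ ^ n := by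
          rw [norm_mul, norm_mul, norm_pow, RCLike.norm_natCast, Nat.add_sub_cancel]
          exact mul_le_of_le_one_left (by positivity) (ha _)
      _ ≤ (n + 1 : ℕ) * r ^ n := by gcongr
      _ = r⁻¹ * ((n + 1 : ℕ) * r ^ (n + 1)) := by field_simp; ring
  · exact (summable_norm_mul_pow_of_norm_le_one ha (by simp)).of_norm

lemma norm_tsum_mul_pow_sub_sum_le (ha : ∀ n, ‖a n‖ ≤ 1) (hx : ‖x‖ ≤ 1 / 2) (N : ℕ) :
    ‖∑' n, a n * x ^ n - ∑ n ∈ Finset.range N, a n * x ^ n‖ ≤ 2 * ‖x‖ ^ N := by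
  have hs := summable_norm_mul_pow_of_norm_le_one ha (by linarith)
  rw [← hs.of_norm.sum_add_tsum_nat_add N, add_sub_cancel_left]
  calc ‖∑' n, a (n + N) * x ^ (n + N)‖ ≤ ‖x‖ ^ N * (1 - ‖x‖)⁻¹ :=
        tsum_of_norm_bounded
          ((hasSum_geometric_of_lt_one (norm_nonneg x) (by linarith)).mul_left _)
          fun n => (norm_mul_pow_le_of_norm_le_one ha _ x).trans_eq (by ring)
    _ ≤ 2 * ‖x‖ ^ N := by
        rw [mul_comm]
        gcongr
        rw [inv_le_comm₀ (by linarith) (by norm_num)]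
        linarith

end BoundedCoeffs

noncomputable def catalanClosedForm (x : ℂ) : ℂ := 2 / (1 + (1 - x) ^ (1 / 2 : ℂ))

lemma re_catalanClosedForm_pos {x : ℂ} (hx : 1 - x ∈ slitPlane) :
    0 < (catalanClosedForm x).re := by
  have hre : 0 < (1 + (1 - x) ^ (1 / 2 : ℂ)).re := by
    rw [add_re, one_re]; linarith [re_cpow_half_pos hx]
  have hnormSq := normSq_pos.2 (one_add_cpow_half_ne_zero hx)
  rw [catalanClosedForm, div_re]
  simp only [re_ofNat, im_ofNat, zero_mul, zero_div, add_zero]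
  positivity

lemma catalanClosedForm_ne_zero {x : ℂ} (hx : 1 - x ∈ slitPlane) : catalanClosedForm x ≠ 0 :=
  fun h => by simpa [h] using re_catalanClosedForm_pos hx

lemma hasDerivAt_catalanClosedForm {x : ℂ} (hx : 1 - x ∈ slitPlane) :
    HasDerivAt catalanClosedForm
      (((1 - x) ^ (1 / 2 : ℂ))⁻¹ / (1 + (1 - x) ^ (1 / 2 : ℂ)) ^ 2) x := by
  have hu := ((hasDerivAt_id' x).const_sub 1).cpow_const (c := 1 / 2) hx
  rw [show (1 / 2 : ℂ) - 1 = -(1 / 2) by norm_num, cpow_neg] at hu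
  have hu1 := one_add_cpow_half_ne_zero hx
  refine ((hasDerivAt_const x (2 : ℂ)).div (hu.const_add 1) hu1).congr_deriv ?_
  field_simp
  ring

noncomputable def hOfInv (x : ℂ) : ℂ := 1 - catalanClosedForm x + 2 * log (catalanClosedForm x)

lemma hasDerivAt_hOfInv {x : ℂ} (hx : 1 - x ∈ slitPlane) :
    HasDerivAt hOfInv (catalanClosedForm x ^ 2 / 4) x := by
  have hv := hasDerivAt_catalanClosedForm hx
  refine (((hasDerivAt_const x 1).sub hv).add
    ((hv.clog (Or.inl (re_catalanClosedForm_pos hx))).const_mul 2)).congr_deriv ?_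
  have hu0 : (1 - x) ^ (1 / 2 : ℂ) ≠ 0 :=
    fun h0 => (re_cpow_half_pos hx).ne' (by rw [h0, zero_re])
  have hu1 := one_add_cpow_half_ne_zero hx
  simp only [catalanClosedForm]
  field_simp
  ring

lemma hFun_eq_hOfInv {ζ : ℂ} (hζ : ζ ≠ 0) (hslit : 1 - ζ⁻¹ ∈ slitPlane) :
    hFun ζ = hOfInv ζ⁻¹ := by
  set u := (1 - ζ⁻¹) ^ (1 / 2 : ℂ) with hu_def
  set v := catalanClosedForm ζ⁻¹ with hv_def
  have hu : u * u = 1 - ζ⁻¹ := cpow_half_mul_self _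
  have hv0 : v ≠ 0 := catalanClosedForm_ne_zero hslit
  have hv : v = 2 * ζ * (1 - u) := by
    rw [hv_def, catalanClosedForm, div_eq_iff (one_add_cpow_half_ne_zero hslit), ← hu_def]
    linear_combination 2 * ζ * hu - 2 * mul_inv_cancel₀ hζ
  have hsqrt : sqrtBranch1 ζ = ζ * u := by rw [sqrtBranch1, one_div]
  have hsq : 4 * (Real.exp 1 : ℂ) * ζ * (-1 + 2 * ζ - 2 * (ζ * u)) = Real.exp 1 * (v * v) := by
    rw [hv]
    linear_combination (-4) * (Real.exp 1 : ℂ) * ζ * ζ * hu +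
      4 * (Real.exp 1 : ℂ) * ζ * mul_inv_cancel₀ hζ
  have harg : v.arg + v.arg ∈ Set.Ioc (-Real.pi) Real.pi := by
    have := abs_lt.1 (abs_arg_lt_pi_div_two_iff.2 (Or.inl (re_catalanClosedForm_pos hslit)))
    constructor <;> linarith [Real.pi_pos]
  have hlog : log (Real.exp 1 * (v * v)) = 1 + 2 * log v := by
    rw [log_ofReal_mul (Real.exp_pos 1) (mul_ne_zero hv0 hv0), Real.log_exp,
      log_mul hv0 hv0 harg]
    push_cast
    ring
  rw [hFun, hOfInv, hsqrt, hsq, hlog, ← hv_def]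
  linear_combination hv

lemma catalan_le_four_pow (n : ℕ) : catalan n ≤ 4 ^ n :=
  calc catalan n ≤ (n + 1) * catalan n := Nat.le_mul_of_pos_left _ n.succ_pos
    _ = n.centralBinom := succ_mul_catalan_eq_centralBinom n
    _ ≤ 4 ^ n := Nat.centralBinom_le_four_pow n

lemma norm_catalan_mul_pow_le (n : ℕ) (y : ℂ) :
    ‖(catalan n : ℂ) * y ^ n‖ ≤ (4 * ‖y‖) ^ n := by
  rw [norm_mul, norm_pow, mul_pow, norm_natCast]
  gcongr
  exact_mod_cast catalan_le_four_pow n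

noncomputable def catalanGF (y : ℂ) : ℂ := ∑' n, (catalan n : ℂ) * y ^ n

section CatalanGF

variable {y : ℂ}

lemma summable_norm_catalan_mul_pow (hy : ‖y‖ < 1 / 4) :
    Summable fun n => ‖(catalan n : ℂ) * y ^ n‖ :=
  .of_nonneg_of_le (fun _ => norm_nonneg _) (fun n => norm_catalan_mul_pow_le n y)
    (summable_geometric_of_lt_one (by positivity) (by linarith))

lemma hasSum_catalanGF (hy : ‖y‖ < 1 / 4) :
    HasSum (fun n => (catalan n : ℂ) * y ^ n) (catalanGF y) :=
  (summable_norm_catalan_mul_pow hy).of_norm.hasSum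

lemma norm_catalanGF_le (hy : ‖y‖ < 1 / 4) : ‖catalanGF y‖ ≤ (1 - 4 * ‖y‖)⁻¹ :=
  tsum_of_norm_bounded (hasSum_geometric_of_lt_one (by positivity) (by linarith))
    (norm_catalan_mul_pow_le · y)

open Finset in
lemma hasSum_catalan_succ_mul_pow (hy : ‖y‖ < 1 / 4) :
    HasSum (fun n => (catalan (n + 1) : ℂ) * y ^ n) (catalanGF y ^ 2) := by
  have hc := summable_norm_catalan_mul_pow hy
  have hterm : ∀ n, ∑ kl ∈ antidiagonal n,
      (catalan kl.1 : ℂ) * y ^ kl.1 * ((catalan kl.2 : ℂ) * y ^ kl.2) =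
        (catalan (n + 1) : ℂ) * y ^ n := by
    intro n
    rw [catalan_succ', Nat.cast_sum, Finset.sum_mul]
    refine Finset.sum_congr rfl fun kl hkl => ?_
    rw [← mem_antidiagonal.1 hkl]
    push_cast
    ring
  have hs := (summable_norm_sum_mul_antidiagonal_of_summable_norm hc hc).of_norm.hasSum
  rw [← tsum_mul_tsum_eq_tsum_sum_antidiagonal_of_summable_norm hc hc] at hs
  simpa only [hterm, ← sq, catalanGF] using hs

lemma mul_catalanGF_sq (hy : ‖y‖ < 1 / 4) : y * catalanGF y ^ 2 = catalanGF y - 1 := by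
  have hshift := (hasSum_nat_add_iff' 1).2 (hasSum_catalanGF hy)
  rw [Finset.sum_range_one, pow_zero, catalan_zero, Nat.cast_one, mul_one] at hshift
  refine HasSum.unique ?_ hshift
  simpa only [pow_succ', mul_left_comm y] using (hasSum_catalan_succ_mul_pow hy).mul_left y

lemma catalanGF_eq_catalanClosedForm (hy : ‖y‖ < 1 / 8) :
    catalanGF y = catalanClosedForm (4 * y) := by
  have hquad := mul_catalanGF_sq (by linarith : ‖y‖ < 1 / 4)
  have hslit : 1 - 4 * y ∈ slitPlane :=
    one_sub_mem_slitPlane (by rw [norm_mul]; norm_num; linarith)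
  set C := catalanGF y
  have hsq : (1 - 2 * y * C) * (1 - 2 * y * C) =
      (1 - 4 * y) ^ (1 / 2 : ℂ) * (1 - 4 * y) ^ (1 / 2 : ℂ) := by
    rw [cpow_half_mul_self]
    linear_combination 4 * y * hquad
  have hsmall : ‖2 * y * C‖ < 1 := by
    have hC : ‖C‖ ≤ 2 := (norm_catalanGF_le (by linarith)).trans <| by
      rw [inv_le_comm₀ (by linarith) (by norm_num)]; linarith
    rw [norm_mul, norm_mul, Complex.norm_two]
    nlinarith [norm_nonneg y]
  -- `‖2yC‖ < 1` puts `1 - 2yC` in the right half-plane, so it is the principal root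
  have hu : 1 - 2 * y * C = (1 - 4 * y) ^ (1 / 2 : ℂ) := by
    refine (mul_self_eq_mul_self_iff.1 hsq).resolve_right fun h => ?_
    have := congrArg re h
    simp only [sub_re, one_re, neg_re] at this
    linarith [re_le_norm (2 * y * C), re_cpow_half_pos hslit]
  rw [catalanClosedForm, eq_div_iff (one_add_cpow_half_ne_zero hslit), ← hu]
  linear_combination (-2) * hquad

end CatalanGF

-- `hCoeff 0 = 0` through the convention `a / 0 = 0`.
noncomputable def hCoeff (j : ℕ) : ℂ := catalan j / (j * 4 ^ j)

noncomputable def hSeries (x : ℂ) : ℂ := ∑' j, hCoeff j * x ^ j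

lemma laurentCoeff_eq_catalan_div {j : ℕ} (hj : 1 ≤ j) :
    laurentCoeff j = catalan j / (j * 4 ^ j) := by
  have hfact : (2 * j)! = 2 * j * (2 * j - 1)! := by
    rw [← Nat.mul_factorial_pred (by omega)]
  have hcat : (j + 1) * catalan j * (j ! * j !) = (2 * j)! := by
    rw [succ_mul_catalan_eq_centralBinom, Nat.centralBinom,
      ← Nat.choose_mul_factorial_mul_factorial (by omega : j ≤ 2 * j), Nat.two_mul j,
      Nat.add_sub_cancel, mul_assoc]
  rw [laurentCoeff, div_eq_div_iff (by positivity) (by positivity)]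
  have h : 2 * (2 * j - 1)! * (j * 4 ^ j) = catalan j * ((j + 1) * j ! ^ 2 * 4 ^ j) := by
    rw [show 2 * (2 * j - 1)! * (j * 4 ^ j) = (2 * j)! * 4 ^ j by rw [hfact]; ring, ← hcat]
    ring
  exact_mod_cast h

lemma norm_hCoeff_le_one (j : ℕ) : ‖hCoeff j‖ ≤ 1 := by
  rcases Nat.eq_zero_or_pos j with rfl | hj
  · simp [hCoeff]
  rw [hCoeff, norm_div, norm_mul, norm_pow, norm_natCast, norm_natCast, Complex.norm_ofNat,
    div_le_one (by positivity)]
  calc (catalan j : ℝ) ≤ 4 ^ j := by exact_mod_cast catalan_le_four_pow j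
    _ ≤ j * 4 ^ j := le_mul_of_one_le_left (by positivity) (by exact_mod_cast hj)

lemma hasDerivAt_hSeries {x : ℂ} (hx : ‖x‖ < 1) :
    HasDerivAt hSeries (catalanGF (x / 4) ^ 2 / 4) x := by
  have hterm : ∀ n : ℕ, hCoeff (n + 1) * ((n + 1 : ℕ) * x ^ (n + 1 - 1)) =
      1 / 4 * ((catalan (n + 1) : ℂ) * (x / 4) ^ n) := by
    intro n
    rw [hCoeff, Nat.add_sub_cancel, div_pow]
    field_simp
    ring
  have hs : HasSum (fun n => hCoeff n * (n * x ^ (n - 1))) (catalanGF (x / 4) ^ 2 / 4) := by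
    have hx4 : ‖x / 4‖ < 1 / 4 := by rw [norm_div, Complex.norm_ofNat]; linarith
    rw [← hasSum_nat_add_iff' 1, Finset.sum_range_one, Nat.cast_zero, zero_mul, mul_zero,
      sub_zero]
    have h := (hasSum_catalan_succ_mul_pow hx4).mul_left (1 / 4)
    rwa [← funext hterm, one_div_mul_eq_div] at h
  rw [← hs.tsum_eq]
  exact hasDerivAt_tsum_mul_pow_of_norm_le_one norm_hCoeff_le_one hx

lemma hSeries_eq_hOfInv {x : ℂ} (hx : ‖x‖ < 1 / 2) : hSeries x = hOfInv x := by
  have hderiv : ∀ z ∈ Metric.ball (0 : ℂ) (1 / 2),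
      HasDerivAt hSeries (catalanClosedForm z ^ 2 / 4) z ∧
        HasDerivAt hOfInv (catalanClosedForm z ^ 2 / 4) z := by
    intro z hz
    rw [mem_ball_zero_iff] at hz
    have hz4 : ‖z / 4‖ < 1 / 8 := by rw [norm_div, Complex.norm_ofNat]; linarith
    refine ⟨?_, hasDerivAt_hOfInv (one_sub_mem_slitPlane (by linarith))⟩
    simpa [catalanGF_eq_catalanClosedForm hz4, mul_div_cancel₀] using
      hasDerivAt_hSeries (x := z) (by linarith)
  refine Metric.isOpen_ball.eqOn_of_deriv_eq (convex_ball _ _).isPreconnected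
    (fun z hz => (hderiv z hz).1.differentiableAt.differentiableWithinAt)
    (fun z hz => (hderiv z hz).2.differentiableAt.differentiableWithinAt)
    (fun z hz => (hderiv z hz).1.deriv.trans (hderiv z hz).2.deriv.symm)
    (Metric.mem_ball_self (by norm_num)) ?_ (mem_ball_zero_iff.2 hx)
  rw [hSeries, tsum_eq_single 0 fun j hj => by simp [zero_pow hj]]
  norm_num [hOfInv, catalanClosedForm, hCoeff]

lemma sum_Icc_laurentCoeff_div_pow (M : ℕ) (ζ : ℂ) :
    ∑ j ∈ Finset.Icc 1 M, (laurentCoeff j : ℂ) / ζ ^ j =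
      ∑ j ∈ Finset.range (M + 1), hCoeff j * ζ⁻¹ ^ j := by
  rw [Finset.range_eq_Ico, Finset.sum_eq_sum_Ico_succ_bot M.succ_pos]
  simp only [hCoeff, Nat.cast_zero, zero_mul, div_zero, zero_add]
  refine Finset.sum_congr (by ext; simp) fun j hj => ?_
  rw [laurentCoeff_eq_catalan_div (Finset.mem_Ico.1 hj).1]
  push_cast
  ring

/-- Laurent expansion of `h` at infinity: `h(ζ) = Σ_{j≥1} b_j/ζ^j` with
`b_j = 2(2j-1)!/((j+1)(j!)² 4^j)`; in particular `b_1 = 1/4`, `b_2 = 1/16`, `b_3 = 5/192`. -/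
theorem h_laurent_expansion :
    (∀ M : ℕ,
      (fun ζ : ℂ => hFun ζ - ∑ j ∈ Finset.Icc 1 M, (laurentCoeff j : ℂ) / ζ ^ j)
        =O[Bornology.cobounded ℂ ⊓
            Filter.principal {ζ : ℂ | ζ.im ≠ 0 ∨ ζ.re < 0 ∨ 1 < ζ.re}]
          fun ζ : ℂ => ζ ^ (-(M : ℤ) - 1)) ∧
    laurentCoeff 1 = 1 / 4 ∧ laurentCoeff 2 = 1 / 16 ∧ laurentCoeff 3 = 5 / 192 := by
  refine ⟨fun M => ?_, by norm_num [laurentCoeff, Nat.factorial],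
    by norm_num [laurentCoeff, Nat.factorial], by norm_num [laurentCoeff, Nat.factorial]⟩
  refine (IsBigO.of_bound 2 ?_).mono inf_le_left
  filter_upwards [tendsto_norm_cobounded_atTop.eventually_gt_atTop 2] with ζ hζ
  have hζ0 : ζ ≠ 0 := norm_pos_iff.1 (by linarith)
  have hx : ‖ζ⁻¹‖ < 1 / 2 := by
    rw [norm_inv, one_div]; exact inv_strictAnti₀ two_pos hζ
  rw [hFun_eq_hOfInv hζ0 (one_sub_mem_slitPlane (by linarith)), ← hSeries_eq_hOfInv hx,
    sum_Icc_laurentCoeff_div_pow, show -(M : ℤ) - 1 = -((M + 1 : ℕ) : ℤ) by push_cast; ring,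
    zpow_neg, zpow_natCast, ← inv_pow, norm_pow]
  exact norm_tsum_mul_pow_sub_sum_le norm_hCoeff_le_one hx.le (M + 1)
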